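/- Let G be in class B with diam(G) ≥ 4, let B0 be a bridge block of G with cut-vertices v1, v2 satisfying e(v1) ≤ e(v2), and let u be a non-cut-vertex of G in B0. Then: (a) if v1, v2, u all lie in partite set V1(B0), then e(u) = e(v2); (b) if v1, v2 lie in V1(B0) and u lies in V2(B0), then e(u) = e(v2) − 1; (c) if v1, u lie in V1(B0) and v2 lies in V2(B0), then e(u) = e(v2) + 1; (d) if v1 lies in V1(B0) and v2, u lie in V2(B0), then e(u) = e(v1) + 1. -/

import Mathlib

open SimpleGraph

variable {V : Type*}

/-- `v` is a cut-vertex of the graph `G`: deleting `v` disconnects `G`. -/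
def CutVtx (G : SimpleGraph V) (v : V) : Prop :=
  ¬ (G.induce {v}ᶜ).Connected

/-- A nonseparable graph: connected and with no cut-vertex. -/
def NoCutVtx {W : Type*} (H : SimpleGraph W) : Prop :=
  H.Connected ∧ ∀ w : W, (H.induce {w}ᶜ).Connected

/-- `B` is (the vertex set of) a block of `G`: a maximal nonseparable
induced subgraph. -/
def IsBlockSet (G : SimpleGraph V) (B : Set V) : Prop :=
  NoCutVtx (G.induce B) ∧ ∀ C : Set V, B ⊆ C → NoCutVtx (G.induce C) → B = C

/-- The set of cut-vertices of `G`. -/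
def cutSet (G : SimpleGraph V) : Set V := {v | CutVtx G v}

/-- The set `B` induces a complete bipartite graph in `G` with
bipartition `(V1, V2)`. -/
def CompBipOn (G : SimpleGraph V) (B V1 V2 : Set V) : Prop :=
  V1.Nonempty ∧ V2.Nonempty ∧ Disjoint V1 V2 ∧ V1 ∪ V2 = B ∧
    ∀ x ∈ B, ∀ y ∈ B, (G.Adj x y ↔ (x ∈ V1 ∧ y ∈ V2) ∨ (x ∈ V2 ∧ y ∈ V1))

/-- A bi-block graph: a connected graph all of whose blocks are
complete bipartite. -/
def BiBlockGraph (G : SimpleGraph V) : Prop :=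
  G.Connected ∧ ∀ B : Set V, IsBlockSet G B → ∃ V1 V2 : Set V, CompBipOn G B V1 V2

/-- The class 𝓑: bi-block graphs with at least two blocks and at most two
cut-vertices in each block. -/
def ClassB (G : SimpleGraph V) : Prop :=
  BiBlockGraph G ∧
  (∃ B1 B2 : Set V, IsBlockSet G B1 ∧ IsBlockSet G B2 ∧ B1 ≠ B2) ∧
  ∀ B : Set V, IsBlockSet G B → (B ∩ cutSet G).ncard ≤ 2

/-- `S` is an admissible vertex set for the associated tree `T_G`:
it contains all cut-vertices of `G`, both vertices of every `K_{1,1}` block,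
exactly one non-cut-vertex from each partite set of every leaf block,
exactly one non-cut-vertex from the cut-vertex-free partite set of every
bridge block whose two cut-vertices share a partite set, and no other
vertices. -/
def AssocSet (G : SimpleGraph V) (S : Set V) : Prop :=
  (∀ v, CutVtx G v → v ∈ S) ∧
  ∀ B V1 V2 : Set V, IsBlockSet G B → CompBipOn G B V1 V2 →
    ((V1.ncard = 1 ∧ V2.ncard = 1) → B ⊆ S) ∧
    (¬ (V1.ncard = 1 ∧ V2.ncard = 1) →
      (((B ∩ cutSet G).ncard = 1) →
          (S ∩ (V1 \ cutSet G)).ncard = 1 ∧ (S ∩ (V2 \ cutSet G)).ncard = 1) ∧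
      (((B ∩ cutSet G).ncard = 2) →
          (((V1 ∩ cutSet G).ncard = 2) →
              (S ∩ (V2 \ cutSet G)).ncard = 1 ∧ S ∩ (V1 \ cutSet G) = ∅) ∧
          (((V2 ∩ cutSet G).ncard = 2) →
              (S ∩ (V1 \ cutSet G)).ncard = 1 ∧ S ∩ (V2 \ cutSet G) = ∅) ∧
          (((V1 ∩ cutSet G).ncard = 1 ∧ (V2 ∩ cutSet G).ncard = 1) →
              S ∩ (B \ cutSet G) = ∅)))

/-- The eccentricity of a vertex. -/
noncomputable def ecc (G : SimpleGraph V) (v : V) : ℕ := sSup (Set.range (G.dist v))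

/-- The diameter of a graph. -/
noncomputable def gdiam (G : SimpleGraph V) : ℕ := sSup (Set.range (ecc G))

/-- The radius of a graph. -/
noncomputable def gradius (G : SimpleGraph V) : ℕ := sInf (Set.range (ecc G))

/-- The center of a graph: vertices of minimum eccentricity. -/
noncomputable def gcenter (G : SimpleGraph V) : Set V := {v | ecc G v = gradius G}

/-- The eccentricity matrix of `G`. -/
noncomputable def eccMatrix (G : SimpleGraph V) : Matrix V V ℝ := fun u v =>
  if G.dist u v = min (ecc G u) (ecc G v) then (G.dist u v : ℝ) else 0

/-- The spectrum of the eccentricity matrix of `G` is symmetric with respect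
to the origin: `μ` is an eigenvalue with multiplicity `l` iff `-μ` is. -/
def SpectrumSymm [Fintype V] [DecidableEq V] (G : SimpleGraph V) : Prop :=
  ∀ (hH : (eccMatrix G).IsHermitian) (μ : ℝ),
    {i | hH.eigenvalues i = μ}.ncard = {i | hH.eigenvalues i = -μ}.ncard

/-- A vertex is diametrically distinguished if it lies on some diametrical
path and is adjacent to some central vertex. -/
noncomputable def DiamDistinguished (G : SimpleGraph V) (u : V) : Prop :=
  (∃ (a b : V) (p : G.Walk a b), p.IsPath ∧ p.length = G.dist a b ∧
      G.dist a b = gdiam G ∧ u ∈ p.support) ∧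
  ∃ z ∈ gcenter G, G.Adj u z

/-!
A walk from a vertex outside a block `B` into `B` always enters `B` through the same vertex:
two different entrances would close an ear of `B`, and a nonseparable graph with an ear added
is still nonseparable, contradicting the maximality of `B`. For a bridge block `B₀` with
cut-vertices `v₁, v₂`, every vertex outside `B₀` thus hangs at `v₁` or at `v₂`, and for
`w ∈ B₀` one gets `e(w) = max (d(w, v₁) + m₁) (d(w, v₂) + m₂)`, where `mᵢ ≥ 1` is the depth of
the part hanging at `vᵢ` (the distances inside `B₀`, at most `2`, never exceed this maximum).
The four cases follow from `d = 1` across and `d = 2` within the partite sets of `B₀`.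
-/

namespace SimpleGraph

variable {G : SimpleGraph V}

def induceComplSingletonIso (C : Set V) (w : C) :
    (G.induce C).induce {w}ᶜ ≃g G.induce (C \ {(w : V)}) where
  toFun x := ⟨x.1.1, x.1.2, fun h => x.2 (Subtype.ext h)⟩
  invFun x := ⟨⟨x.1, x.2.1⟩, fun h => x.2.2 (congrArg Subtype.val h)⟩
  left_inv _ := rfl
  right_inv _ := rfl
  map_rel_iff' := Iff.rfl

theorem connected_induce_of_forall_exists_walk {S K : Set V} (hK : (G.induce K).Connected)
    (hKS : K ⊆ S) (h : ∀ v ∈ S, ∃ z ∈ K, ∃ p : G.Walk v z, ∀ x ∈ p.support, x ∈ S) :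
    (G.induce S).Connected := by
  obtain ⟨⟨u, hu⟩⟩ := hK.nonempty
  refine G.induce_connected_of_patches u (hKS hu) fun {v} hv => ?_
  obtain ⟨z, hz, p, hp⟩ := h v hv
  exact ⟨K ∪ {x | x ∈ p.support}, Set.union_subset hKS hp, Or.inl hu,
    Or.inr p.start_mem_support, induce_union_connected hK.preconnected
      p.connected_induce_support.preconnected ⟨z, hz, p.end_mem_support⟩ _ _⟩

theorem Walk.IsPath.notMem_takeUntil_or_notMem_dropUntil [DecidableEq V] {u w v t : V}
    {p : G.Walk u w} (hp : p.IsPath) (hv : v ∈ p.support) (htv : t ≠ v) :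
    t ∉ (p.takeUntil v hv).support ∨ t ∉ (p.dropUntil v hv).support := by
  by_contra! h
  have hnodup := hp.support_nodup
  rw [← p.take_spec hv, Walk.support_append] at hnodup
  have htail : t ∈ (p.dropUntil v hv).support.tail :=
    ((p.dropUntil v hv).mem_support_iff.mp h.2).resolve_left htv
  exact List.disjoint_of_nodup_append hnodup h.1 htail

theorem Walk.IsPath.exists_walk_to_end_avoiding [DecidableEq V] {z1 z2 w1 w2 v t : V}
    {P : G.Walk w1 w2} (hP : P.IsPath) (h1 : G.Adj z1 w1) (h2 : G.Adj w2 z2) (hz : z1 ≠ z2)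
    (hz1 : z1 ∉ P.support) (hz2 : z2 ∉ P.support) (hv : v ∈ P.support) (hvt : v ≠ t) :
    ∃ z, (z = z1 ∨ z = z2) ∧ z ≠ t ∧
      ∃ p : G.Walk v z, ∀ x ∈ p.support, (x ∈ P.support ∨ x = z) ∧ x ≠ t := by
  -- `v` leaves `P` through whichever end of `P` is not cut off from it by `t`
  have key : (t ∉ (P.takeUntil v hv).support ∧ t ≠ z1) ∨
      (t ∉ (P.dropUntil v hv).support ∧ t ≠ z2) := by
    by_cases htP : t ∈ P.support
    · refine (hP.notMem_takeUntil_or_notMem_dropUntil hv hvt.symm).imp (⟨·, ?_⟩) (⟨·, ?_⟩) <;>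
        rintro rfl <;> contradiction
    · have htake := fun h => htP (P.support_takeUntil_subset_support hv h)
      have hdrop := fun h => htP (P.support_dropUntil_subset_support hv h)
      by_cases htz : t = z1
      · exact Or.inr ⟨hdrop, htz ▸ hz⟩
      · exact Or.inl ⟨htake, htz⟩
  rcases key with ⟨ht, htz⟩ | ⟨ht, htz⟩
  · refine ⟨z1, Or.inl rfl, htz.symm, (P.takeUntil v hv).reverse.concat h1.symm, fun x hx => ?_⟩
    rw [Walk.support_concat, Walk.support_reverse, List.mem_append, List.mem_reverse,
      List.mem_singleton] at hx
    rcases hx with hx | rfl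
    · exact ⟨Or.inl (P.support_takeUntil_subset_support hv hx), fun h => ht (h ▸ hx)⟩
    · exact ⟨Or.inr rfl, htz.symm⟩
  · refine ⟨z2, Or.inr rfl, htz.symm, (P.dropUntil v hv).concat h2, fun x hx => ?_⟩
    rw [Walk.support_concat, List.mem_append, List.mem_singleton] at hx
    rcases hx with hx | rfl
    · exact ⟨Or.inl (P.support_dropUntil_subset_support hv hx), fun h => ht (h ▸ hx)⟩
    · exact ⟨Or.inr rfl, htz.symm⟩

theorem Walk.exists_adj_mem_of_notMem {S : Set V} : ∀ {x b : V} (p : G.Walk x b), x ∉ S →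
    b ∈ S → ∃ y z, ∃ q : G.Walk x y, (∀ v ∈ q.support, v ∉ S) ∧ G.Adj y z ∧ z ∈ S ∧
      z ∈ p.support
  | _, _, .nil, hx, hb => absurd hb hx
  | _, _, .cons (v := c) h p, hx, hb => by
    by_cases hc : c ∈ S
    · exact ⟨_, c, .nil, by simpa using hx, h, hc, by simp⟩
    · obtain ⟨y, z, q, hq, hyz, hz, hzp⟩ := p.exists_adj_mem_of_notMem hc hb
      refine ⟨y, z, .cons h q, ?_, hyz, hz, by simp [hzp]⟩
      simp only [Walk.support_cons, List.mem_cons, forall_eq_or_imp]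
      exact ⟨hx, hq⟩

end SimpleGraph

section Blocks

variable {G : SimpleGraph V} {B : Set V}

theorem noCutVtx_induce_iff :
    NoCutVtx (G.induce B) ↔
      (G.induce B).Connected ∧ ∀ t ∈ B, (G.induce (B \ {t})).Connected := by
  refine and_congr_right fun _ => ⟨fun h t ht => ?_, fun h w => ?_⟩
  · exact (induceComplSingletonIso B ⟨t, ht⟩).connected_iff.mp (h ⟨t, ht⟩)
  · exact (induceComplSingletonIso B w).connected_iff.mpr (h w w.2)

theorem NoCutVtx.nontrivial_of_induce (h : NoCutVtx (G.induce B)) : B.Nontrivial := by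
  obtain ⟨⟨c, hc⟩⟩ := h.1.nonempty
  obtain ⟨⟨z, hz, hzc⟩⟩ := (noCutVtx_induce_iff.mp h).2 c hc |>.nonempty
  exact ⟨z, hz, c, hc, hzc⟩

theorem NoCutVtx.induce_union_support (hB : NoCutVtx (G.induce B)) {z1 z2 w1 w2 : V}
    (hz1 : z1 ∈ B) (hz2 : z2 ∈ B) (hz : z1 ≠ z2) {P : G.Walk w1 w2} (hP : P.IsPath)
    (hPB : ∀ v ∈ P.support, v ∉ B) (h1 : G.Adj z1 w1) (h2 : G.Adj w2 z2) :
    NoCutVtx (G.induce (B ∪ {v | v ∈ P.support})) := by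
  classical
  rw [noCutVtx_induce_iff] at hB ⊢
  refine ⟨connected_induce_union hB.1.preconnected P.connected_induce_support.preconnected
    hz1 P.start_mem_support h1, fun t _ => ?_⟩
  have hK : (G.induce (B \ {t})).Connected := by
    by_cases ht : t ∈ B
    · exact hB.2 t ht
    · rw [Set.sdiff_singleton_eq_self ht]; exact hB.1
  refine connected_induce_of_forall_exists_walk hK
    (Set.sdiff_subset_sdiff_left Set.subset_union_left) ?_
  rintro v ⟨hv | hv, hvt : v ≠ t⟩
  · exact ⟨v, ⟨hv, hvt⟩, Walk.nil, by simp [hv, hvt]⟩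
  obtain ⟨z, hzB, hzt, p, hp⟩ := hP.exists_walk_to_end_avoiding h1 h2 hz
    (fun h => hPB z1 h hz1) (fun h => hPB z2 h hz2) hv hvt
  have hzB : z ∈ B := hzB.elim (· ▸ hz1) (· ▸ hz2)
  refine ⟨z, ⟨hzB, hzt⟩, p, fun x hx => ?_⟩
  obtain ⟨hxP | rfl, hxt⟩ := hp x hx
  exacts [⟨Or.inr hxP, hxt⟩, ⟨Or.inl hzB, hxt⟩]

theorem IsBlockSet.eq_of_adj_of_adj (hB : IsBlockSet G B) {z1 z2 w1 w2 : V}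
    (hz1 : z1 ∈ B) (hz2 : z2 ∈ B) (R : G.Walk w1 w2) (hR : ∀ v ∈ R.support, v ∉ B)
    (h1 : G.Adj z1 w1) (h2 : G.Adj w2 z2) : z1 = z2 := by
  classical
  by_contra hz
  have hPB : ∀ v ∈ R.bypass.support, v ∉ B :=
    fun v hv => hR v (R.support_bypass_subset_support hv)
  have hBC := hB.2 _ Set.subset_union_left
    (hB.1.induce_union_support hz1 hz2 hz R.bypass_isPath hPB h1 h2)
  exact hPB w1 R.bypass.start_mem_support (hBC ▸ Or.inr R.bypass.start_mem_support)

def Separates (G : SimpleGraph V) (c x : V) (B : Set V) : Prop :=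
  ∀ w ∈ B, ∀ p : G.Walk x w, c ∈ p.support

theorem Separates.dist_eq_add {c x w : V} (h : Separates G c x B) (hw : w ∈ B)
    (hr : G.Reachable w x) : G.dist w x = G.dist w c + G.dist c x := by
  classical
  obtain ⟨p, hp⟩ := hr.symm.exists_walk_length_eq_dist
  have hc := h w hw p
  have hlen := congrArg Walk.length (p.take_spec hc)
  rw [Walk.length_append] at hlen
  have hxc := dist_le (p.takeUntil c hc)
  have hcw := dist_le (p.dropUntil c hc)
  have htri := (p.takeUntil c hc).reachable.symm.dist_triangle_right w
  rw [dist_comm (u := x), dist_comm (u := c) (v := w)] at *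
  omega

theorem IsBlockSet.separates_of_adj (hB : IsBlockSet G B) {c x y : V} (hc : c ∈ B)
    (q : G.Walk x y) (hq : ∀ v ∈ q.support, v ∉ B) (hyc : G.Adj y c) : Separates G c x B := by
  intro w hw p
  obtain ⟨y', z, q', hq', hyz, hz, hzp⟩ :=
    p.exists_adj_mem_of_notMem (hq x q.start_mem_support) hw
  have hout : ∀ v ∈ (q.reverse.append q').support, v ∉ B := by
    intro v hv
    rw [Walk.mem_support_append_iff, Walk.support_reverse, List.mem_reverse] at hv
    exact hv.elim (hq v) (hq' v)
  rwa [hB.eq_of_adj_of_adj hc hz _ hout hyc.symm hyz]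

theorem IsBlockSet.cutVtx_of_adj (hB : IsBlockSet G B) {c y : V} (hc : c ∈ B) (hy : y ∉ B)
    (hyc : G.Adj y c) : CutVtx G c := by
  intro hconn
  obtain ⟨z, hz, hzc⟩ := hB.1.nontrivial_of_induce.exists_ne c
  obtain ⟨p⟩ := hconn.preconnected ⟨y, hyc.ne⟩ ⟨z, hzc⟩
  have hsep := hB.separates_of_adj hc (Walk.nil : G.Walk y y) (by simpa using hy) hyc
  obtain ⟨⟨c', hc'⟩, -, hc'c⟩ :=
    List.mem_map.mp ((p.support_map _) ▸ hsep z hz (p.map (Embedding.induce _).toHom))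
  exact hc' hc'c

theorem IsBlockSet.exists_separates_of_cutVtx (hB : IsBlockSet G B) {c : V} (hc : c ∈ B)
    (hcut : CutVtx G c) : ∃ x ∉ B, Separates G c x B := by
  by_contra! h
  apply hcut
  have hK : (G.induce (B \ {c})).Connected := (noCutVtx_induce_iff.mp hB.1).2 c hc
  refine connected_induce_of_forall_exists_walk hK (fun v hv => hv.2) fun v hv => ?_
  by_cases hvB : v ∈ B
  · exact ⟨v, ⟨hvB, hv⟩, .nil, by simpa using hv⟩
  · obtain ⟨w, hw, p, hp⟩ : ∃ w ∈ B, ∃ p : G.Walk v w, c ∉ p.support := by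
      simpa [Separates] using h v hvB
    exact ⟨w, ⟨hw, fun h => hp (h ▸ p.end_mem_support)⟩, p, fun x hx h => hp (h ▸ hx)⟩

theorem IsBlockSet.exists_farthest_separated [Finite V] (hB : IsBlockSet G B) {c : V}
    (hc : c ∈ B) (hcut : CutVtx G c) :
    ∃ y ∉ B, Separates G c y B ∧ ∀ x ∉ B, Separates G c x B → G.dist c x ≤ G.dist c y := by
  obtain ⟨y, ⟨hyB, hy⟩, hmax⟩ := Set.exists_max_image {x | x ∉ B ∧ Separates G c x B}
    (G.dist c) (Set.toFinite _) (hB.exists_separates_of_cutVtx hc hcut)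
  exact ⟨y, hyB, hy, fun x hx hxs => hmax x ⟨hx, hxs⟩⟩

variable {v1 v2 : V}

theorem IsBlockSet.separates_or_separates (hG : G.Connected) (hB : IsBlockSet G B)
    (hv : B ∩ cutSet G = {v1, v2}) {x : V} (hx : x ∉ B) :
    Separates G v1 x B ∨ Separates G v2 x B := by
  have hv1 : v1 ∈ B ∩ cutSet G := hv ▸ Set.mem_insert _ _
  obtain ⟨p⟩ := hG.preconnected x v1
  obtain ⟨y, c, q, hq, hyc, hc, -⟩ := p.exists_adj_mem_of_notMem hx hv1.1
  have hcut : c ∈ B ∩ cutSet G := ⟨hc, hB.cutVtx_of_adj hc (hq y q.end_mem_support) hyc⟩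
  rw [hv] at hcut
  rcases hcut with rfl | rfl
  · exact Or.inl (hB.separates_of_adj hc q hq hyc)
  · exact Or.inr (hB.separates_of_adj hc q hq hyc)

end Blocks

theorem ecc_eq_of_forall_dist_le [Finite V] {G : SimpleGraph V} {w : V} {N : ℕ}
    (hle : ∀ x, G.dist w x ≤ N) (hN : ∃ x, G.dist w x = N) : ecc G w = N := by
  obtain ⟨x, rfl⟩ := hN
  exact le_antisymm (csSup_le ⟨_, x, rfl⟩ (by rintro _ ⟨y, rfl⟩; exact hle y))
    (le_csSup (Set.finite_range _).bddAbove ⟨x, rfl⟩)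

theorem IsBlockSet.exists_ecc_eq_max [Finite V] {G : SimpleGraph V} {B : Set V} {v1 v2 : V}
    (hG : G.Connected) (hB : IsBlockSet G B) (hB2 : ∀ x ∈ B, ∀ y ∈ B, G.dist x y ≤ 2)
    (hne : v1 ≠ v2) (hv : B ∩ cutSet G = {v1, v2}) :
    ∃ m1 m2 : ℕ, 1 ≤ m1 ∧ 1 ≤ m2 ∧
      ∀ w ∈ B, ecc G w = max (G.dist w v1 + m1) (G.dist w v2 + m2) := by
  have hv1 : v1 ∈ B ∩ cutSet G := hv ▸ Set.mem_insert _ _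
  have hv2 : v2 ∈ B ∩ cutSet G := hv ▸ Set.mem_insert_of_mem _ rfl
  obtain ⟨y1, hy1B, hy1, hmax1⟩ := hB.exists_farthest_separated hv1.1 hv1.2
  obtain ⟨y2, hy2B, hy2, hmax2⟩ := hB.exists_farthest_separated hv2.1 hv2.2
  have hm1 := hG.pos_dist_of_ne (ne_of_mem_of_not_mem hv1.1 hy1B)
  have hm2 := hG.pos_dist_of_ne (ne_of_mem_of_not_mem hv2.1 hy2B)
  refine ⟨_, _, hm1, hm2, fun w hw => ecc_eq_of_forall_dist_le (fun x => ?_) ?_⟩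
  · by_cases hx : x ∈ B
    · have := hB2 w hw x hx
      rcases eq_or_ne w v1 with rfl | hw1
      · have := hG.pos_dist_of_ne hne; omega
      · have := hG.pos_dist_of_ne hw1; omega
    · rcases hB.separates_or_separates hG hv hx with h | h
      · have := hmax1 x hx h
        rw [h.dist_eq_add hw (hG.preconnected w x)]; omega
      · have := hmax2 x hx h
        rw [h.dist_eq_add hw (hG.preconnected w x)]; omega
  · rcases le_total (G.dist w v1 + G.dist v1 y1) (G.dist w v2 + G.dist v2 y2) with hle | hle
    · exact ⟨y2, by rw [max_eq_right hle, hy2.dist_eq_add hw (hG.preconnected w y2)]⟩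
    · exact ⟨y1, by rw [max_eq_left hle, hy1.dist_eq_add hw (hG.preconnected w y1)]⟩

section CompBip

variable {G : SimpleGraph V} {B V1 V2 : Set V} {x y : V}

theorem CompBipOn.symm (h : CompBipOn G B V1 V2) : CompBipOn G B V2 V1 := by
  obtain ⟨h1, h2, hd, hu, hadj⟩ := h
  exact ⟨h2, h1, hd.symm, Set.union_comm V1 V2 ▸ hu,
    fun x hx y hy => (hadj x hx y hy).trans or_comm⟩

theorem CompBipOn.left_subset (h : CompBipOn G B V1 V2) : V1 ⊆ B :=
  h.2.2.2.1 ▸ Set.subset_union_left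

theorem CompBipOn.adj (h : CompBipOn G B V1 V2) (hx : x ∈ V1) (hy : y ∈ V2) : G.Adj x y :=
  (h.2.2.2.2 x (h.left_subset hx) y (h.symm.left_subset hy)).mpr (Or.inl ⟨hx, hy⟩)

theorem CompBipOn.not_adj (h : CompBipOn G B V1 V2) (hx : x ∈ V1) (hy : y ∈ V1) :
    ¬ G.Adj x y := by
  rw [h.2.2.2.2 x (h.left_subset hx) y (h.left_subset hy)]
  rintro (⟨-, hy'⟩ | ⟨hx', -⟩)
  exacts [h.2.2.1.notMem_of_mem_left hy hy', h.2.2.1.notMem_of_mem_left hx hx']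

theorem CompBipOn.dist_eq_one (h : CompBipOn G B V1 V2) (hx : x ∈ V1) (hy : y ∈ V2) :
    G.dist x y = 1 :=
  dist_eq_one_iff_adj.mpr (h.adj hx hy)

theorem CompBipOn.dist_eq_two (h : CompBipOn G B V1 V2) (hx : x ∈ V1) (hy : y ∈ V1)
    (hxy : x ≠ y) : G.dist x y = 2 := by
  obtain ⟨z, hz⟩ := h.2.1
  have hxz := h.adj hx hz
  have hzy := (h.adj hy hz).symm
  have h2 : G.dist x y ≤ 2 := dist_le (.cons hxz (.cons hzy .nil))
  have h0 : G.dist x y ≠ 0 := (hxz.reachable.trans hzy.reachable).dist_eq_zero_iff.not.mpr hxy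
  have h1 : G.dist x y ≠ 1 := dist_eq_one_iff_adj.not.mpr (h.not_adj hx hy)
  omega

theorem CompBipOn.dist_le_two (h : CompBipOn G B V1 V2) (hx : x ∈ B) (hy : y ∈ B) :
    G.dist x y ≤ 2 := by
  by_cases hxy : x = y
  · simp [hxy]
  rw [← h.2.2.2.1] at hx hy
  rcases hx with hx | hx <;> rcases hy with hy | hy
  · exact (h.dist_eq_two hx hy hxy).le
  · exact (h.dist_eq_one hx hy).trans_le one_le_two
  · exact (h.symm.dist_eq_one hx hy).trans_le one_le_two
  · exact (h.symm.dist_eq_two hx hy hxy).le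

end CompBip

theorem stmt_8_general {V : Type*} [Fintype V] (G : SimpleGraph V) (hG : ClassB G)
    (B0 V1 V2 : Set V) (hB : IsBlockSet G B0)
    (hbip : CompBipOn G B0 V1 V2)
    (v1 v2 : V) (hne : v1 ≠ v2) (hv : B0 ∩ cutSet G = {v1, v2})
    (hle : ecc G v1 ≤ ecc G v2)
    (u : V) (hu : u ∈ B0) (hnc : ¬ CutVtx G u) :
    (v1 ∈ V1 ∧ v2 ∈ V1 ∧ u ∈ V1 → ecc G u = ecc G v2) ∧
    (v1 ∈ V1 ∧ v2 ∈ V1 ∧ u ∈ V2 → ecc G u = ecc G v2 - 1) ∧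
    (v1 ∈ V1 ∧ u ∈ V1 ∧ v2 ∈ V2 → ecc G u = ecc G v2 + 1) ∧
    (v1 ∈ V1 ∧ v2 ∈ V2 ∧ u ∈ V2 → ecc G u = ecc G v1 + 1) := by
  have hv1 : v1 ∈ B0 ∩ cutSet G := hv ▸ Set.mem_insert _ _
  have hv2 : v2 ∈ B0 ∩ cutSet G := hv ▸ Set.mem_insert_of_mem _ rfl
  have hu1 : u ≠ v1 := fun h => hnc (h ▸ hv1.2)
  have hu2 : u ≠ v2 := fun h => hnc (h ▸ hv2.2)
  obtain ⟨m1, m2, hm1, hm2, hecc⟩ :=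
    hB.exists_ecc_eq_max hG.1.1 (fun _ hx _ hy => hbip.dist_le_two hx hy) hne hv
  have eu := hecc u hu
  have e1 := hecc v1 hv1.1
  have e2 := hecc v2 hv2.1
  rw [dist_self] at e1 e2
  rw [dist_comm (u := v2)] at e2
  refine ⟨?_, ?_, ?_, ?_⟩ <;> rintro ⟨h1, h2, h3⟩
  · rw [hbip.dist_eq_two h3 h1 hu1, hbip.dist_eq_two h3 h2 hu2] at eu
    rw [hbip.dist_eq_two h1 h2 hne] at e1 e2
    omega
  · rw [hbip.symm.dist_eq_one h3 h1, hbip.symm.dist_eq_one h3 h2] at eu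
    rw [hbip.dist_eq_two h1 h2 hne] at e1 e2
    omega
  · rw [hbip.dist_eq_two h2 h1 hu1, hbip.dist_eq_one h2 h3] at eu
    rw [hbip.dist_eq_one h1 h3] at e1 e2
    omega
  · rw [hbip.symm.dist_eq_one h3 h1, hbip.symm.dist_eq_two h3 h2 hu2] at eu
    rw [hbip.dist_eq_one h1 h2] at e1 e2
    omega

theorem stmt_8 {V : Type*} [Fintype V] (G : SimpleGraph V) (hG : ClassB G)
    (h4 : 4 ≤ gdiam G) (B0 V1 V2 : Set V) (hB : IsBlockSet G B0)
    (hbip : CompBipOn G B0 V1 V2)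
    (v1 v2 : V) (hne : v1 ≠ v2) (hv : B0 ∩ cutSet G = {v1, v2})
    (hle : ecc G v1 ≤ ecc G v2)
    (u : V) (hu : u ∈ B0) (hnc : ¬ CutVtx G u) :
    (v1 ∈ V1 ∧ v2 ∈ V1 ∧ u ∈ V1 → ecc G u = ecc G v2) ∧
    (v1 ∈ V1 ∧ v2 ∈ V1 ∧ u ∈ V2 → ecc G u = ecc G v2 - 1) ∧
    (v1 ∈ V1 ∧ u ∈ V1 ∧ v2 ∈ V2 → ecc G u = ecc G v2 + 1) ∧
    (v1 ∈ V1 ∧ v2 ∈ V2 ∧ u ∈ V2 → ecc G u = ecc G v1 + 1) :=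
  stmt_8_general G hG B0 V1 V2 hB hbip v1 v2 hne hv hle u hu hnc
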